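/- Let ψ : A⊗B → B⊗A be a weak distributive law between k-algebras A and B with weak inverse φ : B⊗A → A⊗B. Then the following hold: (1) (μ_B⊗μ_A)∘(id_B⊗ψ⊗id_A) = (ψ∘φ)∘(μ_B⊗μ_A)∘(id_B⊗ψ⊗id_A) as maps B⊗A⊗B⊗A → B⊗A; (2) (μ_B⊗id_A)∘(id_B⊗ψ)∘((ψ∘φ)⊗id_B) = (μ_B⊗id_A)∘(id_B⊗ψ) as maps B⊗A⊗B → B⊗A; (3) (id_B⊗μ_A)∘(ψ⊗id_A)∘(id_A⊗(ψ∘φ)) = (id_B⊗μ_A)∘(ψ⊗id_A) as maps A⊗B⊗A → B⊗A. -/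

import Mathlib

open TensorProduct LinearMap

section WDL

variable (R : Type*) [CommRing R]

section AlgDefs

variable {A B : Type*} [Ring A] [Ring B] [Algebra R A] [Algebra R B]

/-- Weak distributive law axioms, stated pointwise on pure tensors. -/
def IsWeakDistLaw (ψ : A ⊗[R] B →ₗ[R] B ⊗[R] A) : Prop :=
  (∀ (a a' : A) (b : B), ψ ((a * a') ⊗ₜ[R] b) =
      lTensor B (mul' R A) ((TensorProduct.assoc R B A A)
        (rTensor A ψ ((TensorProduct.assoc R A B A).symm (a ⊗ₜ[R] ψ (a' ⊗ₜ[R] b)))))) ∧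
  (∀ (a : A) (b b' : B), ψ (a ⊗ₜ[R] (b * b')) =
      rTensor A (mul' R B) ((TensorProduct.assoc R B B A).symm
        (lTensor B ψ ((TensorProduct.assoc R B A B) (ψ (a ⊗ₜ[R] b) ⊗ₜ[R] b'))))) ∧
  (∀ b : B, ψ ((1 : A) ⊗ₜ[R] b) =
      rTensor A (mul' R B) ((TensorProduct.assoc R B B A).symm
        (b ⊗ₜ[R] ψ ((1 : A) ⊗ₜ[R] (1 : B))))) ∧
  (∀ a : A, ψ (a ⊗ₜ[R] (1 : B)) =
      lTensor B (mul' R A) ((TensorProduct.assoc R B A A)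
        (ψ ((1 : A) ⊗ₜ[R] (1 : B)) ⊗ₜ[R] a)))

/-- (Strict) distributive law axioms, stated pointwise on pure tensors. -/
def IsDistLaw (ψ : A ⊗[R] B →ₗ[R] B ⊗[R] A) : Prop :=
  (∀ (a a' : A) (b : B), ψ ((a * a') ⊗ₜ[R] b) =
      lTensor B (mul' R A) ((TensorProduct.assoc R B A A)
        (rTensor A ψ ((TensorProduct.assoc R A B A).symm (a ⊗ₜ[R] ψ (a' ⊗ₜ[R] b)))))) ∧
  (∀ (a : A) (b b' : B), ψ (a ⊗ₜ[R] (b * b')) =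
      rTensor A (mul' R B) ((TensorProduct.assoc R B B A).symm
        (lTensor B ψ ((TensorProduct.assoc R B A B) (ψ (a ⊗ₜ[R] b) ⊗ₜ[R] b'))))) ∧
  (∀ b : B, ψ ((1 : A) ⊗ₜ[R] b) = b ⊗ₜ[R] (1 : A)) ∧
  (∀ a : A, ψ (a ⊗ₜ[R] (1 : B)) = (1 : B) ⊗ₜ[R] a)

/-- `φ` is a weak inverse of `ψ`. -/
def IsWeakInverse (ψ : A ⊗[R] B →ₗ[R] B ⊗[R] A) (φ : B ⊗[R] A →ₗ[R] A ⊗[R] B) : Prop :=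
  (∀ (a : A) (b : B), ψ (φ (b ⊗ₜ[R] a)) =
      rTensor A (mul' R B) ((TensorProduct.assoc R B B A).symm
        (b ⊗ₜ[R] ψ (a ⊗ₜ[R] (1 : B))))) ∧
  (∀ (a : A) (b : B), φ (ψ (a ⊗ₜ[R] b)) =
      rTensor B (mul' R A) ((TensorProduct.assoc R A A B).symm
        (a ⊗ₜ[R] φ (b ⊗ₜ[R] (1 : A)))))

/-- The weak wreath product multiplication `(μ_B ⊗ μ_A) ∘ (id_B ⊗ ψ ⊗ id_A)`. -/
noncomputable def wreathMul (ψ : A ⊗[R] B →ₗ[R] B ⊗[R] A) :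
    (B ⊗[R] A) ⊗[R] (B ⊗[R] A) →ₗ[R] B ⊗[R] A :=
  TensorProduct.map (mul' R B) (mul' R A)
    ∘ₗ (TensorProduct.assoc R B B (A ⊗[R] A)).symm.toLinearMap
    ∘ₗ lTensor B (TensorProduct.assoc R B A A).toLinearMap
    ∘ₗ lTensor B (rTensor A ψ)
    ∘ₗ lTensor B (TensorProduct.assoc R A B A).symm.toLinearMap
    ∘ₗ (TensorProduct.assoc R B A (B ⊗[R] A)).toLinearMap

end AlgDefs

section CoalgDefs

variable {A B : Type*} [AddCommGroup A] [AddCommGroup B] [Module R A] [Module R B]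

/-- Tensor product comultiplication `(id ⊗ tw ⊗ id) ∘ (dA ⊗ dB)` built from the
comultiplication data `dA`, `dB`. -/
noncomputable def comulD (dA : A →ₗ[R] A ⊗[R] A) (dB : B →ₗ[R] B ⊗[R] B) :
    A ⊗[R] B →ₗ[R] (A ⊗[R] B) ⊗[R] (A ⊗[R] B) :=
  (TensorProduct.tensorTensorTensorComm R A A B B).toLinearMap ∘ₗ TensorProduct.map dA dB

/-- Tensor product counit `ε_A ⊗ ε_B`. -/
noncomputable def counitD (eA : A →ₗ[R] R) (eB : B →ₗ[R] R) : A ⊗[R] B →ₗ[R] R :=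
  (TensorProduct.lid R R).toLinearMap ∘ₗ TensorProduct.map eA eB

/-- The weakly comonoidal conditions for a mutually weak inverse pair `(ψ, φ)`,
with respect to comultiplication/counit data on `A` and `B`. -/
def IsWeaklyComonoidalD (ψ : A ⊗[R] B →ₗ[R] B ⊗[R] A) (φ : B ⊗[R] A →ₗ[R] A ⊗[R] B)
    (dA : A →ₗ[R] A ⊗[R] A) (dB : B →ₗ[R] B ⊗[R] B)
    (eA : A →ₗ[R] R) (eB : B →ₗ[R] R) : Prop :=
  (rTensor (B ⊗[R] A) (ψ ∘ₗ φ) ∘ₗ comulD R dB dA ∘ₗ ψ =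
      TensorProduct.map ψ ψ ∘ₗ comulD R dA dB) ∧
  (lTensor (B ⊗[R] A) (ψ ∘ₗ φ) ∘ₗ comulD R dB dA ∘ₗ ψ =
      TensorProduct.map ψ ψ ∘ₗ comulD R dA dB) ∧
  (rTensor (A ⊗[R] B) (φ ∘ₗ ψ) ∘ₗ comulD R dA dB ∘ₗ φ =
      TensorProduct.map φ φ ∘ₗ comulD R dB dA) ∧
  (lTensor (A ⊗[R] B) (φ ∘ₗ ψ) ∘ₗ comulD R dA dB ∘ₗ φ =
      TensorProduct.map φ φ ∘ₗ comulD R dB dA) ∧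
  (counitD R eB eA ∘ₗ ψ = counitD R eA eB ∘ₗ φ ∘ₗ ψ)

end CoalgDefs

section ComonClass

variable {A B : Type*} [AddCommGroup A] [AddCommGroup B] [Module R A] [Module R B]
  [Coalgebra R A] [Coalgebra R B]

/-- Tensor product comultiplication on `A ⊗ B` for coalgebras `A`, `B`. -/
noncomputable def comulTP : A ⊗[R] B →ₗ[R] (A ⊗[R] B) ⊗[R] (A ⊗[R] B) :=
  comulD R (Coalgebra.comul (R := R) (A := A)) (Coalgebra.comul (R := R) (A := B))

/-- Tensor product counit on `A ⊗ B` for coalgebras `A`, `B`. -/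
noncomputable def counitTP : A ⊗[R] B →ₗ[R] R :=
  counitD R (Coalgebra.counit (R := R) (A := A)) (Coalgebra.counit (R := R) (A := B))

end ComonClass

/-- Weakly comonoidal pair with respect to given coalgebra instances. -/
def IsWeaklyComonoidal {A B : Type*} [Ring A] [Ring B] [Algebra R A] [Algebra R B]
    [Coalgebra R A] [Coalgebra R B]
    (ψ : A ⊗[R] B →ₗ[R] B ⊗[R] A) (φ : B ⊗[R] A →ₗ[R] A ⊗[R] B) : Prop :=
  IsWeaklyComonoidalD R ψ φ (Coalgebra.comul (R := R) (A := A))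
    (Coalgebra.comul (R := R) (A := B)) (Coalgebra.counit (R := R) (A := A))
    (Coalgebra.counit (R := R) (A := B))

end WDL

/-- Data of a (possibly weak) bialgebra structure on a module `M`. -/
structure WBAData (R M : Type*) [CommRing R] [AddCommGroup M] [Module R M] where
  mul : M ⊗[R] M →ₗ[R] M
  one : M
  comul : M →ₗ[R] M ⊗[R] M
  counit : M →ₗ[R] R

namespace WBAData

variable {R M : Type*} [CommRing R] [AddCommGroup M] [Module R M] (d : WBAData R M)

/-- The induced multiplication of `M ⊗ M`. -/
noncomputable def mul2 : (M ⊗[R] M) ⊗[R] (M ⊗[R] M) →ₗ[R] M ⊗[R] M :=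
  TensorProduct.map d.mul d.mul ∘ₗ (TensorProduct.tensorTensorTensorComm R M M M M).toLinearMap

/-- The induced multiplication of `(M ⊗ M) ⊗ M`. -/
noncomputable def mul3 :
    ((M ⊗[R] M) ⊗[R] M) ⊗[R] ((M ⊗[R] M) ⊗[R] M) →ₗ[R] (M ⊗[R] M) ⊗[R] M :=
  TensorProduct.map d.mul2 d.mul ∘ₗ
    (TensorProduct.tensorTensorTensorComm R (M ⊗[R] M) M (M ⊗[R] M) M).toLinearMap

/-- Left multiplication by `a`. -/
noncomputable def lmul (a : M) : M →ₗ[R] M := d.mul ∘ₗ TensorProduct.mk R M M a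

/-- Right multiplication by `c`. -/
noncomputable def rmul (c : M) : M →ₗ[R] M := d.mul ∘ₗ (TensorProduct.mk R M M).flip c

/-- Convolution product of endomorphisms. -/
noncomputable def conv (f g : M →ₗ[R] M) : M →ₗ[R] M :=
  d.mul ∘ₗ TensorProduct.map f g ∘ₗ d.comul

/-- The projection `⊓^L : a ↦ ε(1₁a)1₂`. -/
noncomputable def piL : M →ₗ[R] M :=
  (TensorProduct.lid R M).toLinearMap
    ∘ₗ rTensor M (d.counit ∘ₗ d.mul ∘ₗ (TensorProduct.comm R M M).toLinearMap)
    ∘ₗ (TensorProduct.assoc R M M M).symm.toLinearMap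
    ∘ₗ (TensorProduct.mk R M (M ⊗[R] M)).flip (d.comul d.one)

/-- The projection `⊓^R : a ↦ 1₁ε(a1₂)`. -/
noncomputable def piR : M →ₗ[R] M :=
  (TensorProduct.rid R M).toLinearMap
    ∘ₗ lTensor M (d.counit ∘ₗ d.mul ∘ₗ (TensorProduct.comm R M M).toLinearMap)
    ∘ₗ (TensorProduct.assoc R M M M).toLinearMap
    ∘ₗ TensorProduct.mk R (M ⊗[R] M) M (d.comul d.one)

/-- The axioms of a weak bialgebra on the data `d`. -/
structure IsWeakBialgebra : Prop where
  mul_assoc : d.mul ∘ₗ rTensor M d.mul =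
      d.mul ∘ₗ lTensor M d.mul ∘ₗ (TensorProduct.assoc R M M M).toLinearMap
  one_mul : ∀ x : M, d.mul (d.one ⊗ₜ[R] x) = x
  mul_one : ∀ x : M, d.mul (x ⊗ₜ[R] d.one) = x
  coassoc : (TensorProduct.assoc R M M M).toLinearMap ∘ₗ rTensor M d.comul ∘ₗ d.comul
      = lTensor M d.comul ∘ₗ d.comul
  counit_left : ∀ x : M, (TensorProduct.lid R M) (rTensor M d.counit (d.comul x)) = x
  counit_right : ∀ x : M, (TensorProduct.rid R M) (lTensor M d.counit (d.comul x)) = x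
  comul_mul : d.comul ∘ₗ d.mul = d.mul2 ∘ₗ TensorProduct.map d.comul d.comul
  delta_one_left : d.mul3 ((d.comul d.one ⊗ₜ[R] d.one) ⊗ₜ[R]
      ((TensorProduct.assoc R M M M).symm (d.one ⊗ₜ[R] d.comul d.one)))
      = rTensor M d.comul (d.comul d.one)
  delta_one_right : d.mul3 (((TensorProduct.assoc R M M M).symm
      (d.one ⊗ₜ[R] d.comul d.one)) ⊗ₜ[R] (d.comul d.one ⊗ₜ[R] d.one))
      = rTensor M d.comul (d.comul d.one)
  counit_mul_left : ∀ a b c : M, (TensorProduct.lid R R) (TensorProduct.map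
      (d.counit ∘ₗ d.lmul a) (d.counit ∘ₗ d.rmul c) (d.comul b))
      = d.counit (d.mul (d.mul (a ⊗ₜ[R] b) ⊗ₜ[R] c))
  counit_mul_right : ∀ a b c : M, (TensorProduct.lid R R) (TensorProduct.map
      (d.counit ∘ₗ d.rmul c) (d.counit ∘ₗ d.lmul a) (d.comul b))
      = d.counit (d.mul (d.mul (a ⊗ₜ[R] b) ⊗ₜ[R] c))

/-- The axioms of a (genuine) bialgebra on the data `d`. -/
structure IsBialgebra : Prop where
  mul_assoc : d.mul ∘ₗ rTensor M d.mul =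
      d.mul ∘ₗ lTensor M d.mul ∘ₗ (TensorProduct.assoc R M M M).toLinearMap
  one_mul : ∀ x : M, d.mul (d.one ⊗ₜ[R] x) = x
  mul_one : ∀ x : M, d.mul (x ⊗ₜ[R] d.one) = x
  coassoc : (TensorProduct.assoc R M M M).toLinearMap ∘ₗ rTensor M d.comul ∘ₗ d.comul
      = lTensor M d.comul ∘ₗ d.comul
  counit_left : ∀ x : M, (TensorProduct.lid R M) (rTensor M d.counit (d.comul x)) = x
  counit_right : ∀ x : M, (TensorProduct.rid R M) (lTensor M d.counit (d.comul x)) = x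
  comul_mul : d.comul ∘ₗ d.mul = d.mul2 ∘ₗ TensorProduct.map d.comul d.comul
  comul_one : d.comul d.one = d.one ⊗ₜ[R] d.one
  counit_one : d.counit d.one = 1
  counit_mul : ∀ x y : M, d.counit (d.mul (x ⊗ₜ[R] y)) = d.counit x * d.counit y

/-- `S` is an antipode for the data `d`. -/
def IsAntipode (S : M →ₗ[R] M) : Prop :=
  d.conv LinearMap.id S = d.piL ∧ d.conv S LinearMap.id = d.piR ∧
    d.conv (d.conv S LinearMap.id) S = S

end WBAData

/-- The canonical weak-bialgebra data attached to an algebra-and-coalgebra `H`. -/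
noncomputable def algWBA (R H : Type*) [CommRing R] [Ring H] [Algebra R H] [Coalgebra R H] :
    WBAData R H :=
  { mul := LinearMap.mul' R H
    one := 1
    comul := Coalgebra.comul
    counit := Coalgebra.counit }

/-!
Let `B` act on `B ⊗ A` on the left by `L_b` (multiplication in the first factor) and on the right
by `x · b := (μ_B ⊗ id_A)(id_B ⊗ ψ)(x ⊗ b)`, and symmetrically let `A` act by `R_a` on the right and
by `a · z := (id_B ⊗ μ_A)(ψ ⊗ id_A)(a ⊗ z)` on the left. Axioms (b) and (a) read
`ψ(a ⊗ bb') = ψ(a ⊗ b) · b'` and `ψ(aa' ⊗ b) = a · ψ(a' ⊗ b)`. The weak inverse gives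
`ψφ(x) = x · 1`, and together with (c), (d) also `ψφ(z) = 1 · z`. Hence `ψφ` commutes with all
`L_b` and `R_a`, and fixes the image of `ψ` by (b) with `b' = 1`; this is (1), since the wreath
product of `b ⊗ a` and `b' ⊗ a'` is `L_b R_a' ψ(a ⊗ b')`. For (2),
`ψφ(b ⊗ a) · b' = L_b (ψ(a ⊗ 1) · b') = L_b ψ(a ⊗ b') = (b ⊗ a) · b'` by (b); (3) is the mirror
image, using (a).
-/

section Actions

variable {R A B : Type*} [CommRing R] [Ring A] [Ring B] [Algebra R A] [Algebra R B]

lemma rTensor_mul'_assoc_symm_tmul {M : Type*} [AddCommGroup M] [Module R M]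
    (b : B) (x : B ⊗[R] M) :
    rTensor M (mul' R B) ((TensorProduct.assoc R B B M).symm (b ⊗ₜ[R] x)) =
      rTensor M (mulLeft R b) x := by
  induction x using TensorProduct.induction_on with
  | zero => simp
  | tmul β m => simp
  | add x y hx hy => simp only [tmul_add, map_add, hx, hy]

lemma lTensor_mul'_assoc_tmul {M : Type*} [AddCommGroup M] [Module R M]
    (x : M ⊗[R] A) (a : A) :
    lTensor M (mul' R A) (TensorProduct.assoc R M A A (x ⊗ₜ[R] a)) =
      lTensor M (mulRight R a) x := by
  induction x using TensorProduct.induction_on with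
  | zero => simp
  | tmul m γ => simp
  | add x y hx hy => simp only [add_tmul, map_add, hx, hy]

lemma rTensor_lTensor_comm_apply {M N P Q : Type*} [AddCommGroup M] [Module R M] [AddCommGroup N]
    [Module R N] [AddCommGroup P] [Module R P] [AddCommGroup Q] [Module R Q]
    (f : M →ₗ[R] P) (g : N →ₗ[R] Q) (x : M ⊗[R] N) :
    rTensor Q f (lTensor M g x) = lTensor P g (rTensor N f x) := by
  rw [← comp_apply, rTensor_comp_lTensor, ← lTensor_comp_rTensor, comp_apply]

variable (ψ : A ⊗[R] B →ₗ[R] B ⊗[R] A)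

noncomputable def actRight : (B ⊗[R] A) ⊗[R] B →ₗ[R] B ⊗[R] A :=
  rTensor A (mul' R B) ∘ₗ (TensorProduct.assoc R B B A).symm.toLinearMap ∘ₗ lTensor B ψ ∘ₗ
    (TensorProduct.assoc R B A B).toLinearMap

noncomputable def actLeft : A ⊗[R] (B ⊗[R] A) →ₗ[R] B ⊗[R] A :=
  lTensor B (mul' R A) ∘ₗ (TensorProduct.assoc R B A A).toLinearMap ∘ₗ rTensor A ψ ∘ₗ
    (TensorProduct.assoc R A B A).symm.toLinearMap

lemma actRight_tmul (b : B) (a : A) (b' : B) :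
    actRight ψ ((b ⊗ₜ[R] a) ⊗ₜ[R] b') = rTensor A (mulLeft R b) (ψ (a ⊗ₜ[R] b')) := by
  simp only [actRight, comp_apply, LinearEquiv.coe_coe, assoc_tmul, lTensor_tmul,
    rTensor_mul'_assoc_symm_tmul]

lemma actLeft_tmul (a : A) (b : B) (a' : A) :
    actLeft ψ (a ⊗ₜ[R] (b ⊗ₜ[R] a')) = lTensor B (mulRight R a') (ψ (a ⊗ₜ[R] b)) := by
  simp only [actLeft, comp_apply, LinearEquiv.coe_coe, assoc_symm_tmul, rTensor_tmul,
    lTensor_mul'_assoc_tmul]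

lemma actRight_rTensor_mulLeft (b : B) (y : B ⊗[R] A) (b' : B) :
    actRight ψ (rTensor A (mulLeft R b) y ⊗ₜ[R] b') =
      rTensor A (mulLeft R b) (actRight ψ (y ⊗ₜ[R] b')) := by
  induction y using TensorProduct.induction_on with
  | zero => simp
  | tmul β γ =>
    rw [rTensor_tmul, mulLeft_apply, actRight_tmul, actRight_tmul, mulLeft_mul, rTensor_comp,
      comp_apply]
  | add x y hx hy => simp only [map_add, add_tmul, hx, hy]

lemma actLeft_lTensor_mulRight (a : A) (z : B ⊗[R] A) (a' : A) :
    actLeft ψ (a ⊗ₜ[R] lTensor B (mulRight R a') z) =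
      lTensor B (mulRight R a') (actLeft ψ (a ⊗ₜ[R] z)) := by
  induction z using TensorProduct.induction_on with
  | zero => simp
  | tmul β γ =>
    rw [lTensor_tmul, mulRight_apply, actLeft_tmul, actLeft_tmul, mulRight_mul, lTensor_comp,
      comp_apply]
  | add x y hx hy => simp only [map_add, tmul_add, hx, hy]

lemma wreathMul_tmul_tmul (b : B) (a : A) (b' : B) (a' : A) :
    wreathMul R ψ ((b ⊗ₜ[R] a) ⊗ₜ[R] (b' ⊗ₜ[R] a')) =
      rTensor A (mulLeft R b) (lTensor B (mulRight R a') (ψ (a ⊗ₜ[R] b'))) := by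
  simp only [wreathMul, comp_apply, LinearEquiv.coe_coe, assoc_tmul, lTensor_tmul,
    assoc_symm_tmul, rTensor_tmul]
  induction ψ (a ⊗ₜ[R] b') using TensorProduct.induction_on with
  | zero => simp
  | tmul β γ => simp
  | add x y hx hy => simp only [add_tmul, tmul_add, map_add, hx, hy]

end Actions

section WeakDistLaw

variable {R A B : Type*} [CommRing R] [Ring A] [Ring B] [Algebra R A] [Algebra R B]
  {ψ : A ⊗[R] B →ₗ[R] B ⊗[R] A} {φ : B ⊗[R] A →ₗ[R] A ⊗[R] B}

namespace IsWeakDistLaw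

variable (hψ : IsWeakDistLaw R ψ)
include hψ

lemma apply_mul_tmul (a a' : A) (b : B) :
    ψ ((a * a') ⊗ₜ[R] b) = actLeft ψ (a ⊗ₜ[R] ψ (a' ⊗ₜ[R] b)) :=
  hψ.1 a a' b

lemma apply_tmul_mul (a : A) (b b' : B) :
    ψ (a ⊗ₜ[R] (b * b')) = actRight ψ (ψ (a ⊗ₜ[R] b) ⊗ₜ[R] b') :=
  hψ.2.1 a b b'

lemma apply_one_tmul (b : B) :
    ψ ((1 : A) ⊗ₜ[R] b) = rTensor A (mulLeft R b) (ψ ((1 : A) ⊗ₜ[R] (1 : B))) := by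
  rw [hψ.2.2.1 b, rTensor_mul'_assoc_symm_tmul]

lemma apply_tmul_one (a : A) :
    ψ (a ⊗ₜ[R] (1 : B)) = lTensor B (mulRight R a) (ψ ((1 : A) ⊗ₜ[R] (1 : B))) := by
  rw [hψ.2.2.2 a, lTensor_mul'_assoc_tmul]

end IsWeakDistLaw

namespace IsWeakInverse

variable (hinv : IsWeakInverse R ψ φ)
include hinv

lemma comp_apply_tmul (b : B) (a : A) :
    ψ (φ (b ⊗ₜ[R] a)) = rTensor A (mulLeft R b) (ψ (a ⊗ₜ[R] (1 : B))) := by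
  rw [hinv.1 a b, rTensor_mul'_assoc_symm_tmul]

lemma comp_apply_eq_actRight (y : B ⊗[R] A) : ψ (φ y) = actRight ψ (y ⊗ₜ[R] (1 : B)) := by
  induction y using TensorProduct.induction_on with
  | zero => simp
  | tmul b a => rw [hinv.comp_apply_tmul, actRight_tmul]
  | add x y hx hy => simp only [map_add, add_tmul, hx, hy]

lemma comp_apply_eq_actLeft (hψ : IsWeakDistLaw R ψ) (z : B ⊗[R] A) :
    ψ (φ z) = actLeft ψ ((1 : A) ⊗ₜ[R] z) := by
  induction z using TensorProduct.induction_on with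
  | zero => simp
  | tmul b a =>
    rw [hinv.comp_apply_tmul, actLeft_tmul, hψ.apply_tmul_one a, hψ.apply_one_tmul b,
      rTensor_lTensor_comm_apply]
  | add x y hx hy => simp only [map_add, tmul_add, hx, hy]

lemma comp_apply_self (hψ : IsWeakDistLaw R ψ) (x : A ⊗[R] B) : ψ (φ (ψ x)) = ψ x := by
  induction x using TensorProduct.induction_on with
  | zero => simp
  | tmul a b => rw [hinv.comp_apply_eq_actRight, ← hψ.apply_tmul_mul, mul_one]
  | add x y hx hy => simp only [map_add, hx, hy]

lemma comp_apply_rTensor_lTensor (hψ : IsWeakDistLaw R ψ) (b : B) (a : A) (y : B ⊗[R] A) :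
    ψ (φ (rTensor A (mulLeft R b) (lTensor B (mulRight R a) y))) =
      rTensor A (mulLeft R b) (lTensor B (mulRight R a) (ψ (φ y))) := by
  rw [hinv.comp_apply_eq_actRight, actRight_rTensor_mulLeft, ← hinv.comp_apply_eq_actRight,
    hinv.comp_apply_eq_actLeft hψ, actLeft_lTensor_mulRight, ← hinv.comp_apply_eq_actLeft hψ]

end IsWeakInverse

end WeakDistLaw

theorem weak_inverse_absorption_general
    {R A B : Type*} [CommRing R] [Ring A] [Ring B] [Algebra R A] [Algebra R B]
    (ψ : A ⊗[R] B →ₗ[R] B ⊗[R] A) (φ : B ⊗[R] A →ₗ[R] A ⊗[R] B)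
    (hψ : IsWeakDistLaw R ψ) (hinv : IsWeakInverse R ψ φ) :
    -- (1) `(μ_B ⊗ μ_A)(id_B ⊗ ψ ⊗ id_A) = (ψφ)(μ_B ⊗ μ_A)(id_B ⊗ ψ ⊗ id_A)`
    (wreathMul R ψ = (ψ ∘ₗ φ) ∘ₗ wreathMul R ψ) ∧
    -- (2) `(μ_B ⊗ id_A)(id_B ⊗ ψ)((ψφ) ⊗ id_B) = (μ_B ⊗ id_A)(id_B ⊗ ψ)`
    ((rTensor A (mul' R B) ∘ₗ (TensorProduct.assoc R B B A).symm.toLinearMap ∘ₗ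
        lTensor B ψ) ∘ₗ (TensorProduct.assoc R B A B).toLinearMap ∘ₗ rTensor B (ψ ∘ₗ φ) =
      (rTensor A (mul' R B) ∘ₗ (TensorProduct.assoc R B B A).symm.toLinearMap ∘ₗ
        lTensor B ψ) ∘ₗ (TensorProduct.assoc R B A B).toLinearMap) ∧
    -- (3) `(id_B ⊗ μ_A)(ψ ⊗ id_A)(id_A ⊗ (ψφ)) = (id_B ⊗ μ_A)(ψ ⊗ id_A)`
    ((lTensor B (mul' R A) ∘ₗ (TensorProduct.assoc R B A A).toLinearMap ∘ₗ
        rTensor A ψ) ∘ₗ (TensorProduct.assoc R A B A).symm.toLinearMap ∘ₗ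
        lTensor A (ψ ∘ₗ φ) =
      (lTensor B (mul' R A) ∘ₗ (TensorProduct.assoc R B A A).toLinearMap ∘ₗ
        rTensor A ψ) ∘ₗ (TensorProduct.assoc R A B A).symm.toLinearMap) := by
  refine ⟨?_, ?_, ?_⟩
  · refine TensorProduct.ext_fourfold' fun b a b' a' => ?_
    rw [comp_apply, wreathMul_tmul_tmul, comp_apply, hinv.comp_apply_rTensor_lTensor hψ,
      hinv.comp_apply_self hψ]
  · refine TensorProduct.ext_threefold fun b a b' => ?_
    change actRight ψ (ψ (φ (b ⊗ₜ[R] a)) ⊗ₜ[R] b') = actRight ψ ((b ⊗ₜ[R] a) ⊗ₜ[R] b')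
    rw [hinv.comp_apply_tmul, actRight_rTensor_mulLeft, ← hψ.apply_tmul_mul, one_mul,
      actRight_tmul]
  · refine TensorProduct.ext_threefold' fun a b a' => ?_
    change actLeft ψ (a ⊗ₜ[R] ψ (φ (b ⊗ₜ[R] a'))) = actLeft ψ (a ⊗ₜ[R] (b ⊗ₜ[R] a'))
    rw [hinv.comp_apply_eq_actLeft hψ, actLeft_tmul, actLeft_lTensor_mulRight,
      ← hψ.apply_mul_tmul, mul_one, actLeft_tmul]

/-- absorption properties of `ψ ∘ φ`. -/
theorem weak_inverse_absorption
    {R A B : Type*} [CommRing R] [Ring A] [Ring B] [Algebra R A] [Algebra R B]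
    (ψ : A ⊗[R] B →ₗ[R] B ⊗[R] A) (φ : B ⊗[R] A →ₗ[R] A ⊗[R] B)
    (hψ : IsWeakDistLaw R ψ) (hφ : IsWeakDistLaw R φ) (hinv : IsWeakInverse R ψ φ) :
    -- (1) `(μ_B ⊗ μ_A)(id_B ⊗ ψ ⊗ id_A) = (ψφ)(μ_B ⊗ μ_A)(id_B ⊗ ψ ⊗ id_A)`
    (wreathMul R ψ = (ψ ∘ₗ φ) ∘ₗ wreathMul R ψ) ∧
    -- (2) `(μ_B ⊗ id_A)(id_B ⊗ ψ)((ψφ) ⊗ id_B) = (μ_B ⊗ id_A)(id_B ⊗ ψ)`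
    ((rTensor A (mul' R B) ∘ₗ (TensorProduct.assoc R B B A).symm.toLinearMap ∘ₗ
        lTensor B ψ) ∘ₗ (TensorProduct.assoc R B A B).toLinearMap ∘ₗ rTensor B (ψ ∘ₗ φ) =
      (rTensor A (mul' R B) ∘ₗ (TensorProduct.assoc R B B A).symm.toLinearMap ∘ₗ
        lTensor B ψ) ∘ₗ (TensorProduct.assoc R B A B).toLinearMap) ∧
    -- (3) `(id_B ⊗ μ_A)(ψ ⊗ id_A)(id_A ⊗ (ψφ)) = (id_B ⊗ μ_A)(ψ ⊗ id_A)`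
    ((lTensor B (mul' R A) ∘ₗ (TensorProduct.assoc R B A A).toLinearMap ∘ₗ
        rTensor A ψ) ∘ₗ (TensorProduct.assoc R A B A).symm.toLinearMap ∘ₗ
        lTensor A (ψ ∘ₗ φ) =
      (lTensor B (mul' R A) ∘ₗ (TensorProduct.assoc R B A A).toLinearMap ∘ₗ
        rTensor A ψ) ∘ₗ (TensorProduct.assoc R A B A).symm.toLinearMap) :=
  weak_inverse_absorption_general ψ φ hψ hinv
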